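/- Let n ≥ 1, let B and C be finite sets with A = B ∩ C, and let R_B and R_C be equivalence relations on B and C respectively, each with at most n equivalence classes, such that R_B and R_C agree on A (for all a, a′ ∈ A, R_B(a,a′) iff R_C(a,a′)). Then there exists an equivalence relation R on B ∪ C with at most n equivalence classes such that R restricted to B equals R_B and R restricted to C equals R_C. -/

import Mathlib

/-!
Label the classes of `R_B` and of `R_C` injectively by numbers below `n`. Since `R_B` and `R_C`
agree on `A = B ∩ C`, sending the `C`-label of each `a ∈ A` to its `B`-label is a well-defined
partial injection of `Fin n`; extending it to a permutation and relabelling the classes of `R_C`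
by it makes the two labellings agree on `A`. They then glue to a labelling of `B ∪ C`, whose
kernel is the amalgam.
-/

theorem Setoid.exists_ker_eq_of_card_le {X : Type*} (S : Setoid X) [Finite (Quotient S)] {n : ℕ}
    (h : Nat.card (Quotient S) ≤ n) : ∃ f : X → Fin n, Setoid.ker f = S := by
  let e : Quotient S ↪ Fin n := (Finite.equivFin _).toEmbedding.trans (Fin.castLEEmb h)
  refine ⟨e ∘ Quotient.mk S, Setoid.ext fun x y => ?_⟩
  rw [Setoid.ker_def, Function.comp_apply, Function.comp_apply, e.injective.eq_iff, Quotient.eq]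

theorem Setoid.card_quotient_ker_le {X β : Type*} [Finite β] (f : X → β) :
    Nat.card (Quotient (Setoid.ker f)) ≤ Nat.card β :=
  Nat.card_le_card_of_injective _ (Setoid.kerLift_injective f)

theorem exists_perm_comp_eq_of_eq_iff_eq {X β : Type*} [Finite β] (f g : X → β)
    (hfg : ∀ x y, f x = f y ↔ g x = g y) : ∃ σ : Equiv.Perm β, ∀ x, σ (f x) = g x := by
  have hfact : g.FactorsThrough f := fun x y h => (hfg x y).mp h
  have hinj : (Set.range f).InjOn (Function.extend f g id) := by
    rintro _ ⟨x, rfl⟩ _ ⟨y, rfl⟩ h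
    rw [hfact.extend_apply, hfact.extend_apply] at h
    exact (hfg x y).mpr h
  obtain ⟨σ, hσ⟩ := Cardinal.extend_function_finite ⟨_, hinj.injective⟩ ⟨Equiv.refl β⟩
  exact ⟨σ, fun x => (hσ ⟨f x, x, rfl⟩).trans (hfact.extend_apply id x)⟩

theorem Finset.exists_union_extend {α β : Type*} [DecidableEq α] {B C : Finset α}
    (f : B → β) (g : C → β) (hfg : ∀ a (hB : a ∈ B) (hC : a ∈ C), f ⟨a, hB⟩ = g ⟨a, hC⟩) :
    ∃ h : (B ∪ C : Finset α) → β,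
      (∀ a (ha : a ∈ B), h ⟨a, mem_union_left C ha⟩ = f ⟨a, ha⟩) ∧
      (∀ a (ha : a ∈ C), h ⟨a, mem_union_right B ha⟩ = g ⟨a, ha⟩) := by
  refine ⟨fun x => if hx : (x : α) ∈ B then f ⟨x, hx⟩
    else g ⟨x, (mem_union.mp x.2).resolve_left hx⟩, fun a ha => dif_pos ha, fun a ha => ?_⟩
  by_cases haB : a ∈ B
  · exact (dif_pos haB).trans (hfg a haB ha)
  · exact dif_neg haB

theorem amalgamate_bounded_equiv_rels_general {α : Type*} [DecidableEq α] (n : ℕ)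
    (B C : Finset α)
    (SB : Setoid {x // x ∈ B}) (SC : Setoid {x // x ∈ C})
    (hB : Nat.card (Quotient SB) ≤ n) (hC : Nat.card (Quotient SC) ≤ n)
    (hagree : ∀ (a a' : α) (haB : a ∈ B) (haC : a ∈ C) (ha'B : a' ∈ B)
      (ha'C : a' ∈ C), SB.r ⟨a, haB⟩ ⟨a', ha'B⟩ ↔ SC.r ⟨a, haC⟩ ⟨a', ha'C⟩) :
    ∃ S : Setoid {x // x ∈ B ∪ C}, Nat.card (Quotient S) ≤ n ∧
      (∀ (a a' : α) (ha : a ∈ B) (ha' : a' ∈ B),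
        S.r ⟨a, Finset.mem_union_left _ ha⟩ ⟨a', Finset.mem_union_left _ ha'⟩ ↔
          SB.r ⟨a, ha⟩ ⟨a', ha'⟩) ∧
      (∀ (a a' : α) (ha : a ∈ C) (ha' : a' ∈ C),
        S.r ⟨a, Finset.mem_union_right _ ha⟩ ⟨a', Finset.mem_union_right _ ha'⟩ ↔
          SC.r ⟨a, ha⟩ ⟨a', ha'⟩) := by
  obtain ⟨fB, rfl⟩ := SB.exists_ker_eq_of_card_le hB
  obtain ⟨fC, rfl⟩ := SC.exists_ker_eq_of_card_le hC
  let toB (x : {a // a ∈ B ∧ a ∈ C}) : {a // a ∈ B} := ⟨x, x.2.1⟩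
  let toC (x : {a // a ∈ B ∧ a ∈ C}) : {a // a ∈ C} := ⟨x, x.2.2⟩
  obtain ⟨σ, hσ⟩ := exists_perm_comp_eq_of_eq_iff_eq (fC ∘ toC) (fB ∘ toB)
    fun x y => (hagree x y x.2.1 x.2.2 y.2.1 y.2.2).symm
  obtain ⟨L, hLB, hLC⟩ := Finset.exists_union_extend fB (σ ∘ fC)
    fun a hB hC => (hσ ⟨a, hB, hC⟩).symm
  refine ⟨Setoid.ker L, (Setoid.card_quotient_ker_le L).trans_eq (Nat.card_fin n),
    fun a a' ha ha' => ?_, fun a a' ha ha' => ?_⟩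
  · rw [Setoid.ker_def, Setoid.ker_def, hLB a ha, hLB a' ha']
  · rw [Setoid.ker_def, Setoid.ker_def, hLC a ha, hLC a' ha', Function.comp_apply,
      Function.comp_apply, σ.injective.eq_iff]

/-- Disjoint amalgamation for equivalence relations with at most `n` classes:
two equivalence relations on `B` and `C` agreeing on `B ∩ C`, each with at most
`n` classes, extend to a common equivalence relation on `B ∪ C` with at most
`n` classes. -/
theorem amalgamate_bounded_equiv_rels {α : Type*} [DecidableEq α] (n : ℕ)
    (hn : 1 ≤ n) (B C : Finset α)
    (SB : Setoid {x // x ∈ B}) (SC : Setoid {x // x ∈ C})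
    (hB : Nat.card (Quotient SB) ≤ n) (hC : Nat.card (Quotient SC) ≤ n)
    (hagree : ∀ (a a' : α) (haB : a ∈ B) (haC : a ∈ C) (ha'B : a' ∈ B)
      (ha'C : a' ∈ C), SB.r ⟨a, haB⟩ ⟨a', ha'B⟩ ↔ SC.r ⟨a, haC⟩ ⟨a', ha'C⟩) :
    ∃ S : Setoid {x // x ∈ B ∪ C}, Nat.card (Quotient S) ≤ n ∧
      (∀ (a a' : α) (ha : a ∈ B) (ha' : a' ∈ B),
        S.r ⟨a, Finset.mem_union_left _ ha⟩ ⟨a', Finset.mem_union_left _ ha'⟩ ↔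
          SB.r ⟨a, ha⟩ ⟨a', ha'⟩) ∧
      (∀ (a a' : α) (ha : a ∈ C) (ha' : a' ∈ C),
        S.r ⟨a, Finset.mem_union_right _ ha⟩ ⟨a', Finset.mem_union_right _ ha'⟩ ↔
          SC.r ⟨a, ha⟩ ⟨a', ha'⟩) :=
  amalgamate_bounded_equiv_rels_general n B C SB SC hB hC hagree
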